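/- arXiv:2008.01518 — 3 statements merged into one kernel-verified Lean document; each statement's English description precedes it below -/
import Mathlib

section
/- On the normal bundle TM⊥ of a semi-invariant submanifold M, the operator C (the normal part of G restricted to normal vectors) defines an f-structure; that is, C³ + C = 0. -/
/-!
Algebraic model of a normal complex contact metric manifold `M̄` together with a
submanifold `M` tangent to the vertical vector fields `U` and `V`.

`F` plays the role of the commutative ring of smooth functions on `M̄` and `X`
the `F`-module of smooth vector fields on `M̄`.
-/

/-- A normal complex contact metric manifold `M̄` (of real dimension `4m+2`),
modeled algebraically: `g` is the Hermitian metric, `J` the complex structure,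
`G`, `H = GJ` the structure tensors, `U`, `V = -JU` the vertical vector fields
with dual 1-forms `u`, `v`, `σ K = g (∇̄_K U) V`, `nabla` the Levi-Civita
connection `∇̄` of `g`, `act` the derivative of functions along vector fields,
and `lie` the Lie bracket.  Korkmaz normality is recorded through the formulas
`∇̄_K U = -GK + σ(K)V` and `∇̄_K V = -HK - σ(K)U`. -/
structure NCCMM (F : Type*) (X : Type*) [CommRing F] [AddCommGroup X] [Module F X] where
  g : X →ₗ[F] X →ₗ[F] F
  J : X →ₗ[F] X
  G : X →ₗ[F] X
  H : X →ₗ[F] X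
  U : X
  V : X
  u : X →ₗ[F] F
  v : X →ₗ[F] F
  σ : X →ₗ[F] F
  nabla : X → X → X
  act : X → F → F
  lie : X → X → X
  g_symm : ∀ K L, g K L = g L K
  g_hermitian : ∀ K L, g (J K) (J L) = g K L
  H_eq : ∀ K, H K = G (J K)
  V_eq : V = - J U
  J_sq : ∀ K, J (J K) = - K
  G_sq : ∀ K, G (G K) = - K + u K • U + v K • V
  H_sq : ∀ K, H (H K) = - K + u K • U + v K • V
  GJ_anti : ∀ K, G (J K) = - J (G K)
  G_U : G U = 0
  g_G_skew : ∀ K L, g (G K) L = - g K (G L)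
  u_eq : ∀ K, u K = g K U
  v_eq : ∀ K, v K = g K V
  nabla_add₁ : ∀ K K' L, nabla (K + K') L = nabla K L + nabla K' L
  nabla_add₂ : ∀ K L L', nabla K (L + L') = nabla K L + nabla K L'
  nabla_smul₁ : ∀ (a : F) (K L : X), nabla (a • K) L = a • nabla K L
  metric_compat : ∀ K L Z, act K (g L Z) = g (nabla K L) Z + g L (nabla K Z)
  torsion_free : ∀ K L, nabla K L - nabla L K = lie K L
  σ_eq : ∀ K, σ K = g (nabla K U) V
  nabla_U : ∀ K, nabla K U = - G K + σ K • V
  nabla_V : ∀ K, nabla K V = - H K - σ K • U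

/-- A submanifold `M` of `M̄` tangent to `U` and `V`, described by the
orthogonal projections `tp` (tangential part) and `np` (normal part) of the
ambient vector fields; vector fields tangent to `M` are those with `tp K = K`
and vector fields normal to `M` are those with `np N = N`. -/
structure SubmanifoldData (F : Type*) (X : Type*) [CommRing F] [AddCommGroup X]
    [Module F X] (A : NCCMM F X) where
  tp : X →ₗ[F] X
  np : X →ₗ[F] X
  tp_add_np : ∀ K, tp K + np K = K
  tp_tp : ∀ K, tp (tp K) = tp K
  np_np : ∀ K, np (np K) = np K
  np_tp : ∀ K, np (tp K) = 0
  tp_np : ∀ K, tp (np K) = 0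
  g_tp_np : ∀ K L, A.g (tp K) (np L) = 0
  U_tang : tp A.U = A.U
  V_tang : tp A.V = A.V
  lie_tang : ∀ K L, tp K = K → tp L = L → tp (A.lie K L) = A.lie K L

namespace SubmanifoldData

variable {F X : Type*} [CommRing F] [AddCommGroup X] [Module F X]
variable {A : NCCMM F X} (S : SubmanifoldData F X A)

/-- The induced connection `∇` on `M` (Gauss formula `∇̄_K L = ∇_K L + h(K,L)`). -/
def conn (K L : X) : X := S.tp (A.nabla K L)

/-- The second fundamental form `h` of `M`. -/
def sff (K L : X) : X := S.np (A.nabla K L)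

/-- The shape operator `A_N` (Weingarten formula `∇̄_K N = -A_N K + ∇⊥_K N`). -/
def shape (N K : X) : X := - S.tp (A.nabla K N)

/-- The normal connection `∇⊥`. -/
def nconn (K N : X) : X := S.np (A.nabla K N)

/-- `P K`: the tangential part of `G K`, so that `G K = P K + Q K`. -/
def P (K : X) : X := S.tp (A.G K)

/-- `Q K`: the normal part of `G K`, so that `G K = P K + Q K`. -/
def Q (K : X) : X := S.np (A.G K)

/-- `B N`: the tangential part of `G N` for normal `N`, so `G N = B N + C N`. -/
def B (N : X) : X := S.tp (A.G N)

/-- `C N`: the normal part of `G N` for normal `N`, so `G N = B N + C N`. -/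
def C (N : X) : X := S.np (A.G N)

/-- `K` belongs to `sp{U,V}⊥ ⊂ TM`: it is tangent to `M` and orthogonal to `U`, `V`. -/
def Hor (K : X) : Prop := S.tp K = K ∧ A.g K A.U = 0 ∧ A.g K A.V = 0

/-- The (invariant) distribution `D = {K ∈ sp{U,V}⊥ : Q K = 0}`. -/
def Dinv (K : X) : Prop := S.Hor K ∧ S.Q K = 0

/-- The (anti-invariant) distribution `D⊥ = {K ∈ sp{U,V}⊥ : P K = 0}`. -/
def Danti (K : X) : Prop := S.Hor K ∧ S.P K = 0

/-- `M` is a semi-invariant submanifold: `TM = D ⊕ D⊥ ⊕ sp{U,V}`, the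
distribution `D` is invariant under `G` and `H`, and `G`, `H` map `D⊥`
into the normal bundle `TM⊥`. -/
def SemiInvariant : Prop :=
  (∀ K, S.tp K = K → ∃ (K₁ K₂ : X) (a b : F), S.Dinv K₁ ∧ S.Danti K₂ ∧
      K = K₁ + K₂ + a • A.U + b • A.V) ∧
  ((A.G : X → X) '' {K | S.Dinv K} = {K | S.Dinv K}) ∧
  ((A.H : X → X) '' {K | S.Dinv K} = {K | S.Dinv K}) ∧
  (∀ K, S.Danti K → S.np (A.G K) = A.G K ∧ S.np (A.H K) = A.H K)

/-- `M` is totally umbilical: `h(K,L) = g(K,L) μ` for all tangent `K`, `L`,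
where `μ` is the mean curvature (normal) vector field. -/
def TotallyUmbilical : Prop :=
  ∃ μ : X, S.np μ = μ ∧
    ∀ K L : X, S.tp K = K → S.tp L = L → S.sff K L = A.g K L • μ

end SubmanifoldData


namespace NCCMM

variable {F X : Type*} [CommRing F] [AddCommGroup X] [Module F X] (A : NCCMM F X)

theorem G_V : A.G A.V = 0 := by
  rw [A.V_eq, map_neg, A.GJ_anti, A.G_U, map_zero, neg_zero, neg_zero]

end NCCMM

namespace SubmanifoldData

variable {F X : Type*} [CommRing F] [AddCommGroup X] [Module F X]
variable {A : NCCMM F X} (S : SubmanifoldData F X A)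

theorem np_eq_zero_of_tangent {K : X} (hK : S.tp K = K) : S.np K = 0 := by
  rw [← hK, S.np_tp]

theorem G_G_of_normal {N : X} (hN : S.np N = N) : A.G (A.G N) = -N := by
  have hu : A.u N = 0 := by rw [A.u_eq, A.g_symm, ← hN, ← S.U_tang, S.g_tp_np]
  have hv : A.v N = 0 := by rw [A.v_eq, A.g_symm, ← hN, ← S.V_tang, S.g_tp_np]
  rw [A.G_sq, hu, hv, zero_smul, zero_smul, add_zero, add_zero]

theorem np_G_G_of_tangent {K : X} (hK : S.tp K = K) : S.np (A.G (A.G K)) = 0 := by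
  rw [A.G_sq, map_add, map_add, map_neg, map_smul, map_smul, S.np_eq_zero_of_tangent hK,
    S.np_eq_zero_of_tangent S.U_tang, S.np_eq_zero_of_tangent S.V_tang]
  simp only [neg_zero, smul_zero, add_zero]

/-- The normal part of `G² = -I` on `TM⊥`. -/
theorem C_C_of_normal {N : X} (hN : S.np N = N) : S.C (S.C N) = -N - S.Q (S.B N) := by
  have hsplit : A.G (A.G N) = A.G (S.B N) + A.G (S.C N) := by
    rw [B, C, ← map_add, S.tp_add_np]
  have h := congrArg S.np hsplit
  rw [S.G_G_of_normal hN, map_neg, hN, map_add] at h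
  rw [C, Q, h]
  abel

/-- `Q` maps `TM` into `G(D⊥)`, and `G²` maps `D⊥` back into `TM`. -/
theorem C_Q_of_tangent (hSI : S.SemiInvariant) {K : X} (hK : S.tp K = K) :
    S.C (S.Q K) = 0 := by
  obtain ⟨hdec, -, -, hanti⟩ := hSI
  obtain ⟨K₁, K₂, a, b, hK₁, hK₂, rfl⟩ := hdec K hK
  have hQ : S.Q (K₁ + K₂ + a • A.U + b • A.V) = A.G K₂ := by
    simp only [Q, map_add, map_smul, A.G_U, A.G_V, smul_zero, add_zero]
    rw [show S.np (A.G K₁) = 0 from hK₁.2, (hanti K₂ hK₂).1, zero_add]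
  rw [hQ, C, S.np_G_G_of_tangent hK₂.1.1]

end SubmanifoldData

section

variable {F X : Type*} [CommRing F] [AddCommGroup X] [Module F X]

/-- on the normal bundle of a semi-invariant submanifold `M`,
the operator `C` (normal part of `G` on normal fields) is an `f`-structure:
`C³ + C = 0`. -/
theorem statement4 (A : NCCMM F X) (S : SubmanifoldData F X A)
    (hSI : S.SemiInvariant) :
    ∀ N : X, S.np N = N → S.C (S.C (S.C N)) + S.C N = 0 := by
  intro N hN
  have hCQB : S.C (S.Q (S.B N)) = 0 := S.C_Q_of_tangent hSI (S.tp_tp _)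
  rw [S.C_C_of_normal hN]
  simp only [SubmanifoldData.C, map_sub, map_neg] at hCQB ⊢
  rw [hCQB, sub_zero, neg_add_cancel]

end
end

section
/- For all vector fields K, L in the anti-invariant distribution D⊥ of a semi-invariant submanifold M, the Lie bracket [K,L] lies in D ⊕ D⊥; equivalently, ḡ([K,L], U) = ḡ([K,L], V) = 0. -/
/-!
Metric compatibility and the Korkmaz formulas turn `ḡ(∇̄_K L, U)` into
`ḡ(L, GK) - σ(K) ḡ(L, V)` and `ḡ(∇̄_K L, V)` into `ḡ(L, HK) + σ(K) ḡ(L, U)`.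
For `K, L ∈ D⊥` both vanish, since `GK` and `HK` are normal to `M`; torsion-freeness
passes this on to `[K, L] = ∇̄_K L - ∇̄_L K`.
-/

namespace NCCMM

variable {F X : Type*} [CommRing F] [AddCommGroup X] [Module F X] (A : NCCMM F X)

theorem nabla_zero (K : X) : A.nabla K 0 = 0 := by
  simpa using A.nabla_add₂ K 0 0

theorem act_zero (K : X) : A.act K 0 = 0 := by
  simpa [nabla_zero] using A.metric_compat K 0 0

theorem g_nabla_of_g_eq_zero {L W : X} (h : A.g L W = 0) (K : X) :
    A.g (A.nabla K L) W = - A.g L (A.nabla K W) := by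
  have := A.metric_compat K L W
  rw [h, act_zero] at this
  exact eq_neg_of_add_eq_zero_left this.symm

theorem g_lie (K L W : X) :
    A.g (A.lie K L) W = A.g (A.nabla K L) W - A.g (A.nabla L K) W := by
  rw [← A.torsion_free, map_sub, LinearMap.sub_apply]

theorem g_nabla_U {L : X} (hLU : A.g L A.U = 0) (K : X) :
    A.g (A.nabla K L) A.U = A.g L (A.G K) - A.σ K * A.g L A.V := by
  rw [A.g_nabla_of_g_eq_zero hLU, A.nabla_U]
  simp only [map_add, map_neg, map_smul, smul_eq_mul]
  ring

theorem g_nabla_V {L : X} (hLV : A.g L A.V = 0) (K : X) :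
    A.g (A.nabla K L) A.V = A.g L (A.H K) + A.σ K * A.g L A.U := by
  rw [A.g_nabla_of_g_eq_zero hLV, A.nabla_V]
  simp only [map_sub, map_neg, map_smul, smul_eq_mul]
  ring

end NCCMM

namespace SubmanifoldData

variable {F X : Type*} [CommRing F] [AddCommGroup X] [Module F X]
variable {A : NCCMM F X} (S : SubmanifoldData F X A)

theorem g_eq_zero_of_tangent_of_normal {K N : X} (hK : S.tp K = K) (hN : S.np N = N) :
    A.g K N = 0 := by
  simpa [hK, hN] using S.g_tp_np K N

theorem g_nabla_vertical_eq_zero (hSI : S.SemiInvariant) {K L : X} (hK : S.Danti K)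
    (hL : S.Danti L) :
    A.g (A.nabla K L) A.U = 0 ∧ A.g (A.nabla K L) A.V = 0 := by
  obtain ⟨⟨hLt, hLU, hLV⟩, -⟩ := hL
  obtain ⟨hGK, hHK⟩ := hSI.2.2.2 K hK
  refine ⟨?_, ?_⟩
  · rw [A.g_nabla_U hLU, S.g_eq_zero_of_tangent_of_normal hLt hGK, hLV, mul_zero, sub_zero]
  · rw [A.g_nabla_V hLV, S.g_eq_zero_of_tangent_of_normal hLt hHK, hLU, mul_zero, add_zero]

end SubmanifoldData

section

variable {F X : Type*} [CommRing F] [AddCommGroup X] [Module F X]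

/-- for `K, L ∈ D⊥`, the bracket `[K,L]` lies in `D ⊕ D⊥`;
equivalently `ḡ([K,L],U) = ḡ([K,L],V) = 0`. -/
theorem statement10 (A : NCCMM F X) (S : SubmanifoldData F X A)
    (hSI : S.SemiInvariant) (K L : X) (hK : S.Danti K) (hL : S.Danti L) :
    A.g (A.lie K L) A.U = 0 ∧ A.g (A.lie K L) A.V = 0 := by
  obtain ⟨hKLU, hKLV⟩ := S.g_nabla_vertical_eq_zero hSI hK hL
  obtain ⟨hLKU, hLKV⟩ := S.g_nabla_vertical_eq_zero hSI hL hK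
  rw [A.g_lie, A.g_lie, hKLU, hKLV, hLKU, hLKV, sub_zero, and_self]

end
end

section
/- There does not exist a totally umbilical proper semi-invariant submanifold of a normal complex contact metric manifold; that is, if M is a semi-invariant submanifold that is totally umbilical, then M cannot satisfy both dim D ≠ 0 and dim D⊥ ≠ 0. -/
namespace NCCMM

variable {F X : Type*} [CommRing F] [AddCommGroup X] [Module F X] (A : NCCMM F X)

theorem G_G_of_orthogonal {K : X} (hU : A.g K A.U = 0) (hV : A.g K A.V = 0) :
    A.G (A.G K) = - K := by
  rw [A.G_sq, A.u_eq, A.v_eq, hU, hV, zero_smul, zero_smul, add_zero, add_zero]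

theorem eq_zero_of_G_eq_zero {K : X} (hU : A.g K A.U = 0) (hV : A.g K A.V = 0)
    (hG : A.G K = 0) : K = 0 := by
  rw [← neg_eq_zero, ← A.G_G_of_orthogonal hU hV, hG, map_zero]

end NCCMM

namespace SubmanifoldData

variable {F X : Type*} [CommRing F] [AddCommGroup X] [Module F X]
variable {A : NCCMM F X} (S : SubmanifoldData F X A)

theorem np_V : S.np A.V = 0 := by
  simpa only [S.V_tang] using S.np_tp A.V

/-- Normality `∇̄_K U = -GK + σ(K)V` together with `V` tangent gives `h(K, U) = -QK`. -/
theorem sff_U (K : X) : S.sff K A.U = - S.Q K := by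
  rw [sff, A.nabla_U, map_add, map_neg, map_smul, np_V, smul_zero, add_zero, Q]

variable {S}

theorem TotallyUmbilical.sff_eq_zero (hTU : S.TotallyUmbilical)
    {K L : X} (hK : S.tp K = K) (hL : S.tp L = L) (hKL : A.g K L = 0) : S.sff K L = 0 := by
  obtain ⟨μ, -, humb⟩ := hTU
  rw [humb K L hK hL, hKL, zero_smul]

theorem TotallyUmbilical.Q_eq_zero (hTU : S.TotallyUmbilical)
    {K : X} (hK : S.tp K = K) (hKU : A.g K A.U = 0) : S.Q K = 0 := by
  simpa only [sff_U, neg_eq_zero] using hTU.sff_eq_zero hK S.U_tang hKU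

theorem SemiInvariant.Q_eq_G (hSI : S.SemiInvariant) {K : X}
    (hK : S.Danti K) : S.Q K = A.G K :=
  (hSI.2.2.2 K hK).1

/-- On `D⊥` the operator `G` is its own normal part `Q`, which umbilicity forces to vanish;
since `G² = -I` on `sp{U,V}⊥`, this kills `D⊥`. -/
theorem Danti.eq_zero_of_totallyUmbilical (hSI : S.SemiInvariant)
    (hTU : S.TotallyUmbilical) {K : X} (hK : S.Danti K) : K = 0 := by
  obtain ⟨hKt, hKU, hKV⟩ := hK.1
  refine A.eq_zero_of_G_eq_zero hKU hKV ?_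
  rw [← hSI.Q_eq_G hK, hTU.Q_eq_zero hKt hKU]

end SubmanifoldData

section

variable {F X : Type*} [CommRing F] [AddCommGroup X] [Module F X]

/-- there is no totally umbilical proper semi-invariant
submanifold of a normal complex contact metric manifold: if `M` is
semi-invariant and totally umbilical, then `D` and `D⊥` cannot both be
nonzero. -/
theorem statement19 (A : NCCMM F X) (S : SubmanifoldData F X A)
    (hSI : S.SemiInvariant) (hTU : S.TotallyUmbilical) :
    ¬ ((∃ K : X, S.Dinv K ∧ K ≠ 0) ∧ (∃ K : X, S.Danti K ∧ K ≠ 0)) := by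
  rintro ⟨-, K, hK, hK0⟩
  exact hK0 (SubmanifoldData.Danti.eq_zero_of_totallyUmbilical hSI hTU hK)

end
end
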